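/- arXiv:2409.07366 — 6 statements merged into one kernel-verified Lean document; each statement's English description precedes it below -/
import Mathlib

section
/- Let G be a claw-free graph, let P = p_1 p_2 … p_k be a longest path of G, and let u be a vertex of G not on P such that u is adjacent to p_i. Then 1 < i < k and p_{i-1} is adjacent to p_{i+1} in G. -/
open SimpleGraph

/-- `p` is a longest path of `G`: it is a path, and no path of `G` is longer. -/
def IsLongestPath {V : Type*} (G : SimpleGraph V) {u v : V} (p : G.Walk u v) : Prop :=
  p.IsPath ∧ ∀ (x y : V) (q : G.Walk x y), q.IsPath → q.length ≤ p.length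

/-- `v` is a Gallai vertex of `G`: it lies on every longest path of `G`. -/
def IsGallaiVertex {V : Type*} (G : SimpleGraph V) (v : V) : Prop :=
  ∀ (x y : V) (p : G.Walk x y), IsLongestPath G p → v ∈ p.support

/-- `G` is `H`-free: no induced subgraph of `G` is isomorphic to `H`. -/
def Free {W V : Type*} (H : SimpleGraph W) (G : SimpleGraph V) : Prop :=
  IsEmpty (H ↪g G)

/-- The claw `K_{1,3}`. -/
def claw : SimpleGraph (Fin 1 ⊕ Fin 3) := completeBipartiteGraph (Fin 1) (Fin 3)

/-- `P_3 + 2P_1`: a three-vertex path together with two isolated vertices. -/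
def P3_2P1 : SimpleGraph (Fin 5) := fromEdgeSet {s(0,1), s(1,2)}
/-- `K_3 + 2P_1`: a triangle together with two isolated vertices. -/
def K3_2P1 : SimpleGraph (Fin 5) := fromEdgeSet {s(0,1), s(1,2), s(0,2)}
/-- `2P_2 + P_1`: two disjoint edges together with one isolated vertex. -/
def twoP2_P1 : SimpleGraph (Fin 5) := fromEdgeSet {s(0,1), s(2,3)}
/-- `P_2 + 3P_1`: an edge together with three isolated vertices. -/
def P2_3P1 : SimpleGraph (Fin 5) := fromEdgeSet {s(0,1)}
/-- `2P_2`: the disjoint union of two edges. -/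
def twoP2 : SimpleGraph (Fin 4) := fromEdgeSet {s(0,1), s(2,3)}
/-- The paw `N_{1,0,0}`: a triangle with a pendant vertex. -/
def paw : SimpleGraph (Fin 4) := fromEdgeSet {s(0,1), s(1,2), s(0,2), s(2,3)}
/-- The diamond: `K_4` minus an edge. -/
def diamond : SimpleGraph (Fin 4) := fromEdgeSet {s(0,1), s(0,2), s(0,3), s(1,2), s(1,3)}
/-- The bull `N_{1,1,0}`: a triangle with two pendant vertices at distinct vertices. -/
def bull : SimpleGraph (Fin 5) := fromEdgeSet {s(0,1), s(1,2), s(0,2), s(0,3), s(1,4)}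
/-- `N_{2,0,0}`: a triangle with a path of length two appended at one vertex. -/
def N200 : SimpleGraph (Fin 5) := fromEdgeSet {s(0,1), s(1,2), s(0,2), s(0,3), s(3,4)}
/-- `N_{1,0,0} + P_1`: the paw together with an isolated vertex. -/
def paw_P1 : SimpleGraph (Fin 5) := fromEdgeSet {s(0,1), s(1,2), s(0,2), s(0,3)}
/-- `K_3 + P_2`: a triangle together with a disjoint edge. -/
def K3_P2 : SimpleGraph (Fin 5) := fromEdgeSet {s(0,1), s(1,2), s(0,2), s(3,4)}

/-- `x` is a cut vertex of `G`: deleting `x` leaves a disconnected graph. -/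
def IsCutVertex {V : Type*} (G : SimpleGraph V) (x : V) : Prop :=
  ¬ (G.induce {y | y ≠ x}).Preconnected

/-- A linear forest: an acyclic graph in which every vertex has degree at most two,
i.e. a graph every connected component of which is a path. -/
def IsLinearForest {V : Type*} (G : SimpleGraph V) : Prop :=
  G.IsAcyclic ∧ ∀ v : V, (G.neighborSet v).ncard ≤ 2

/-- A 5-ring: the vertices can be partitioned into five nonempty stable sets
`S 0, …, S 4` such that (indices mod 5) `S i` is complete to `S (i±1)` and
anticomplete to `S (i±2)`. -/
def Is5Ring {V : Type*} (G : SimpleGraph V) : Prop :=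
  ∃ S : Fin 5 → Set V,
    (∀ i, (S i).Nonempty) ∧
    (∀ v : V, ∃! i, v ∈ S i) ∧
    (∀ i, ∀ u ∈ S i, ∀ v ∈ S i, ¬ G.Adj u v) ∧
    (∀ i, ∀ u ∈ S i, ∀ v ∈ S (i + 1), G.Adj u v) ∧
    (∀ i, ∀ u ∈ S i, ∀ v ∈ S (i + 2), ¬ G.Adj u v)

/-!
A vertex off a longest path `P` can be adjacent neither to an end of `P` nor to two consecutive
vertices of `P`: otherwise `P` could be extended, or `u` inserted into it. So `p_i` is internal and
`u` sees neither `p_{i-1}` nor `p_{i+1}`; since `p_i` with its three neighbours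
`u, p_{i-1}, p_{i+1}` induces no claw, `p_{i-1}` and `p_{i+1}` are adjacent.
-/

namespace SimpleGraph.Walk

variable {V : Type*} {G : SimpleGraph V} {a b u : V}

lemma IsPath.exists_length_succ_of_adj_getVert {p : G.Walk a b} (hp : p.IsPath)
    (hu : u ∉ p.support) {j : ℕ} (hj : j < p.length)
    (h₁ : G.Adj (p.getVert j) u) (h₂ : G.Adj u (p.getVert (j + 1))) :
    ∃ q : G.Walk a b, q.IsPath ∧ q.length = p.length + 1 := by
  refine ⟨(p.take j).append (cons h₁ (cons h₂ (p.drop (j + 1)))), ?_, ?_⟩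
  · rw [isPath_def, support_append, support_cons, support_cons, List.tail_cons,
      support_take, drop_support_eq_support_drop_min, min_eq_left hj, List.nodup_middle,
      List.take_append_drop, List.nodup_cons]
    exact ⟨hu, hp.support_nodup⟩
  · simp only [length_append, take_length, length_cons, drop_length]
    omega

end SimpleGraph.Walk

namespace IsLongestPath

variable {V : Type*} {G : SimpleGraph V} {a b u : V} {p : G.Walk a b}

lemma not_adj_start (hp : IsLongestPath G p) (hu : u ∉ p.support) : ¬ G.Adj u a := fun h => by
  simpa using hp.2 _ _ _ (hp.1.cons hu (h := h))

lemma not_adj_end (hp : IsLongestPath G p) (hu : u ∉ p.support) : ¬ G.Adj b u := fun h => by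
  simpa using hp.2 _ _ _ (hp.1.concat hu h)

lemma not_adj_getVert_of_adj_getVert_succ (hp : IsLongestPath G p) (hu : u ∉ p.support)
    {j : ℕ} (hj : j < p.length) (h₂ : G.Adj u (p.getVert (j + 1))) :
    ¬ G.Adj (p.getVert j) u := fun h₁ => by
  obtain ⟨q, hq, hlen⟩ := hp.1.exists_length_succ_of_adj_getVert hu hj h₁ h₂
  have := hp.2 _ _ q hq
  omega

end IsLongestPath

lemma Free.claw_adj_or_adj_or_adj {V : Type*} {G : SimpleGraph V} (hG : _root_.Free claw G)
    {v x y z : V} (hx : G.Adj v x) (hy : G.Adj v y) (hz : G.Adj v z)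
    (hxy : x ≠ y) (hxz : x ≠ z) (hyz : y ≠ z) :
    G.Adj x y ∨ G.Adj x z ∨ G.Adj y z := by
  by_contra! h
  obtain ⟨nxy, nxz, nyz⟩ := h
  let f : Fin 1 ⊕ Fin 3 → V := Sum.elim (fun _ => v) ![x, y, z]
  have hf_inj : f.Injective := by
    rintro (s | s) (t | t) <;> fin_cases s <;> fin_cases t <;>
      simp [f, hx.ne, hy.ne, hz.ne, hx.ne', hy.ne', hz.ne', hxy, hxz, hyz, hxy.symm, hxz.symm,
        hyz.symm]
  have hf_adj : ∀ s t, G.Adj (f s) (f t) ↔ claw.Adj s t := by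
    rintro (s | s) (t | t) <;> fin_cases s <;> fin_cases t <;>
      simp [f, claw, hx, hy, hz, adj_comm, nxy, nxz, nyz]
  exact hG.false ⟨⟨f, hf_inj⟩, hf_adj _ _⟩

/-- `p.getVert i` is the paper's `p_{i+1}`. -/
theorem stmt_2_general {V : Type} (G : SimpleGraph V) (hfree : _root_.Free claw G)
    {a b : V} (p : G.Walk a b) (hp : IsLongestPath G p)
    (u : V) (hu : u ∉ p.support) (i : ℕ) (hi : i ≤ p.length)
    (hadj : G.Adj u (p.getVert i)) :
    0 < i ∧ i < p.length ∧ G.Adj (p.getVert (i - 1)) (p.getVert (i + 1)) := by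
  have hi₀ : 0 < i := Nat.pos_of_ne_zero fun h => hp.not_adj_start hu (by simpa [h] using hadj)
  have hi_lt : i < p.length :=
    hi.lt_of_ne fun h => hp.not_adj_end hu (by simpa [h] using hadj.symm)
  have hi_succ : i - 1 + 1 = i := Nat.sub_add_cancel hi₀
  have hprev : G.Adj (p.getVert (i - 1)) (p.getVert i) := by
    simpa [hi_succ] using p.adj_getVert_succ (i := i - 1) (by omega)
  have hu_prev : ¬ G.Adj (p.getVert (i - 1)) u :=
    hp.not_adj_getVert_of_adj_getVert_succ hu (by omega) (by rwa [hi_succ])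
  have hu_next : ¬ G.Adj u (p.getVert (i + 1)) := fun h =>
    hp.not_adj_getVert_of_adj_getVert_succ hu hi_lt h hadj.symm
  have hne : p.getVert (i - 1) ≠ p.getVert (i + 1) := fun h => by
    have := hp.1.getVert_injOn (show i - 1 ≤ p.length by omega)
      (show i + 1 ≤ p.length by omega) h
    omega
  have hu_ne : ∀ j, u ≠ p.getVert j := fun j h => hu (h ▸ p.getVert_mem_support j)
  refine ⟨hi₀, hi_lt, ?_⟩
  rcases hfree.claw_adj_or_adj_or_adj hadj.symm hprev.symm (p.adj_getVert_succ hi_lt)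
    (hu_ne _) (hu_ne _) hne with h | h | h
  exacts [(hu_prev h.symm).elim, (hu_next h).elim, h]

/-- In a claw-free graph, if a vertex `u` off a longest path `p` is adjacent to the
`i`-th vertex of `p` (0-indexed, so `p.getVert i` is `p_{i+1}`), then that vertex is
internal and its two neighbours on the path are adjacent. -/
theorem stmt_2 {V : Type} [Fintype V] (G : SimpleGraph V) (hfree : _root_.Free claw G)
    {a b : V} (p : G.Walk a b) (hp : IsLongestPath G p)
    (u : V) (hu : u ∉ p.support) (i : ℕ) (hi : i ≤ p.length)
    (hadj : G.Adj u (p.getVert i)) :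
    0 < i ∧ i < p.length ∧ G.Adj (p.getVert (i - 1)) (p.getVert (i + 1)) :=
  stmt_2_general G hfree p hp u hu i hi hadj
end

section
/- Let G be a claw-free graph, let P = p_1 p_2 … p_k be a longest path of G, and let u be a vertex not on P adjacent to p_i with 1 < i < k. If u has a neighbor v that is also not on P, then the four vertices {u, v, p_{i-1}, p_{i+1}} induce a 2P_2 in G (the only edges among them are uv and p_{i-1}p_{i+1}). -/
open SimpleGraph

/-!
Splicing a path that avoids `p` between two consecutive vertices `p_j, p_{j+1}` of `p` yields a
longer path. For a longest path this forbids the detours `p_{i-1} u p_i`, `p_i u p_{i+1}`,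
`p_{i-1} v u p_i` and `p_i u v p_{i+1}`, so neither `u` nor `v` sees `p_{i-1}` or `p_{i+1}`.
Then `p_i` with the leaves `u, p_{i-1}, p_{i+1}` would be a claw unless `p_{i-1} p_{i+1}` is
an edge.
-/

theorem Free.adj_of_adj_of_adj {V : Type*} {G : SimpleGraph V} (hfree : _root_.Free claw G)
    {c x y z : V} (hcx : G.Adj c x) (hcy : G.Adj c y) (hcz : G.Adj c z)
    (hxy : x ≠ y) (hxz : x ≠ z) (hyz : y ≠ z)
    (hnxy : ¬ G.Adj x y) (hnxz : ¬ G.Adj x z) : G.Adj y z := by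
  by_contra hnyz
  let f : Fin 1 ⊕ Fin 3 → V := Sum.elim (fun _ => c) ![x, y, z]
  have hf_inj : f.Injective := by
    rintro (a | a) (b | b) hab <;> simp only [f, Sum.elim_inl, Sum.elim_inr] at hab
    · exact congrArg _ (Subsingleton.elim a b)
    · fin_cases b <;> simp_all
    · fin_cases a <;> simp_all
    · fin_cases a <;> fin_cases b <;> simp_all [eq_comm]
  have hf_adj : ∀ a b, G.Adj (f a) (f b) ↔ claw.Adj a b := by
    rintro (a | a) (b | b) <;> fin_cases a <;> fin_cases b <;> simp_all [f, claw, G.adj_comm]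
  exact hfree.false ⟨⟨f, hf_inj⟩, hf_adj _ _⟩

namespace SimpleGraph.Walk

variable {V : Type*} {G : SimpleGraph V}

def spliceAt {u v x y : V} (p : G.Walk u v) (j : ℕ) (q : G.Walk x y)
    (hx : G.Adj (p.getVert j) x) (hy : G.Adj y (p.getVert (j + 1))) : G.Walk u v :=
  (p.take j).append (cons hx (q.append (cons hy (p.drop (j + 1)))))

theorem length_spliceAt {u v x y : V} (p : G.Walk u v) {j : ℕ} (hj : j < p.length)
    (q : G.Walk x y) (hx : G.Adj (p.getVert j) x) (hy : G.Adj y (p.getVert (j + 1))) :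
    (p.spliceAt j q hx hy).length = p.length + q.length + 1 := by
  simp only [spliceAt, length_append, length_cons, take_length, drop_length]
  omega

theorem support_spliceAt {u v x y : V} (p : G.Walk u v) {j : ℕ} (hj : j < p.length)
    (q : G.Walk x y) (hx : G.Adj (p.getVert j) x) (hy : G.Adj y (p.getVert (j + 1))) :
    (p.spliceAt j q hx hy).support =
      p.support.take (j + 1) ++ q.support ++ p.support.drop (j + 1) := by
  rw [spliceAt, support_append, support_cons, List.tail_cons, support_append, support_cons,
    List.tail_cons, support_take, drop_support_eq_support_drop_min, min_eq_left hj,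
    List.append_assoc]

theorem IsPath.spliceAt {u v x y : V} {p : G.Walk u v} (hp : p.IsPath) {j : ℕ}
    (hj : j < p.length) {q : G.Walk x y} (hq : q.IsPath)
    (hdisj : q.support.Disjoint p.support)
    (hx : G.Adj (p.getVert j) x) (hy : G.Adj y (p.getVert (j + 1))) :
    (p.spliceAt j q hx hy).IsPath := by
  refine IsPath.mk' ?_
  rw [support_spliceAt p hj q hx hy]
  have hperm := (List.perm_append_comm (l₁ := p.support.take (j + 1))
    (l₂ := q.support)).append_right (p.support.drop (j + 1))
  rw [List.append_assoc q.support, List.take_append_drop] at hperm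
  exact hperm.nodup_iff.2 (List.nodup_append'.2 ⟨hq.support_nodup, hp.support_nodup, hdisj⟩)

end SimpleGraph.Walk

theorem IsLongestPath.not_adj_of_adj_of_disjoint {V : Type*} {G : SimpleGraph V}
    {u v : V} {p : G.Walk u v} (hp : IsLongestPath G p) {j : ℕ} (hj : j < p.length)
    {x y : V} {q : G.Walk x y} (hq : q.IsPath) (hdisj : q.support.Disjoint p.support)
    (hx : G.Adj (p.getVert j) x) : ¬ G.Adj y (p.getVert (j + 1)) := by
  intro hy
  have := hp.2 _ _ _ (hp.1.spliceAt hj hq hdisj hx hy)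
  rw [p.length_spliceAt hj q hx hy] at this
  omega

theorem IsLongestPath.not_adj_of_adj_of_notMem {V : Type*} {G : SimpleGraph V}
    {u v : V} {p : G.Walk u v} (hp : IsLongestPath G p) {j : ℕ} (hj : j < p.length)
    {x : V} (hx : x ∉ p.support) (hjx : G.Adj (p.getVert j) x) :
    ¬ G.Adj x (p.getVert (j + 1)) :=
  hp.not_adj_of_adj_of_disjoint hj (q := .nil) Walk.IsPath.nil
    (by simp [hx]) hjx

theorem IsLongestPath.not_adj_of_adj_of_adj_of_notMem {V : Type*} {G : SimpleGraph V}
    {u v : V} {p : G.Walk u v} (hp : IsLongestPath G p) {j : ℕ} (hj : j < p.length)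
    {x y : V} (hx : x ∉ p.support) (hy : y ∉ p.support) (hxy : G.Adj x y)
    (hjx : G.Adj (p.getVert j) x) : ¬ G.Adj y (p.getVert (j + 1)) :=
  hp.not_adj_of_adj_of_disjoint hj (q := .cons hxy .nil) (by simp [hxy.ne])
    (by simp [hx, hy]) hjx

theorem stmt_3_general {V : Type} (G : SimpleGraph V) (hfree : _root_.Free claw G)
    {a b : V} (p : G.Walk a b) (hp : IsLongestPath G p)
    (u : V) (hu : u ∉ p.support) (i : ℕ) (hi0 : 0 < i) (hik : i < p.length)
    (hadj : G.Adj u (p.getVert i))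
    (v : V) (hv : v ∉ p.support) (huv : G.Adj u v) :
    G.Adj (p.getVert (i - 1)) (p.getVert (i + 1)) ∧
    ¬ G.Adj u (p.getVert (i - 1)) ∧ ¬ G.Adj u (p.getVert (i + 1)) ∧
    ¬ G.Adj v (p.getVert (i - 1)) ∧ ¬ G.Adj v (p.getVert (i + 1)) := by
  obtain ⟨k, rfl⟩ : ∃ k, i = k + 1 := ⟨i - 1, by omega⟩
  rw [Nat.add_sub_cancel]
  have hk : k < p.length := by omega
  have hu_prev : ¬ G.Adj u (p.getVert k) := fun h =>
    hp.not_adj_of_adj_of_notMem hk hu h.symm hadj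
  have hu_next : ¬ G.Adj u (p.getVert (k + 2)) :=
    hp.not_adj_of_adj_of_notMem hik hu hadj.symm
  have hv_prev : ¬ G.Adj v (p.getVert k) := fun h =>
    hp.not_adj_of_adj_of_adj_of_notMem hk hv hu huv.symm h.symm hadj
  have hv_next : ¬ G.Adj v (p.getVert (k + 2)) :=
    hp.not_adj_of_adj_of_adj_of_notMem hik hu hv huv hadj.symm
  have hne : p.getVert k ≠ p.getVert (k + 2) := fun h => by
    have := hp.1.getVert_injOn (by omega : k ≤ p.length)
      (by omega : k + 2 ≤ p.length) h
    omega
  refine ⟨?_, hu_prev, hu_next, hv_prev, hv_next⟩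
  exact hfree.adj_of_adj_of_adj hadj.symm (p.adj_getVert_succ hk).symm
    (p.adj_getVert_succ hik) (fun h => hu (h ▸ p.getVert_mem_support k))
    (fun h => hu (h ▸ p.getVert_mem_support _)) hne hu_prev hu_next

/-- In a claw-free graph, if `u ∉ p` is adjacent to the internal vertex `p.getVert i`
of a longest path `p` and `u` has a neighbour `v ∉ p`, then
`{u, v, p.getVert (i-1), p.getVert (i+1)}` induces a `2P_2`: the only edges among
these four vertices are `uv` and the edge between the two path vertices. -/
theorem stmt_3 {V : Type} [Fintype V] (G : SimpleGraph V) (hfree : _root_.Free claw G)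
    {a b : V} (p : G.Walk a b) (hp : IsLongestPath G p)
    (u : V) (hu : u ∉ p.support) (i : ℕ) (hi0 : 0 < i) (hik : i < p.length)
    (hadj : G.Adj u (p.getVert i))
    (v : V) (hv : v ∉ p.support) (huv : G.Adj u v) :
    G.Adj (p.getVert (i - 1)) (p.getVert (i + 1)) ∧
    ¬ G.Adj u (p.getVert (i - 1)) ∧ ¬ G.Adj u (p.getVert (i + 1)) ∧
    ¬ G.Adj v (p.getVert (i - 1)) ∧ ¬ G.Adj v (p.getVert (i + 1)) :=
  stmt_3_general G hfree p hp u hu i hi0 hik hadj v hv huv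
end

section
/- Let G be a connected (claw, P_3 + 2P_1)-free graph containing four vertices x, y, z, w that induce a P_3 + P_1, where x y z is the three-vertex path (edges xy and yz) and w is isolated in the induced subgraph. Then y is a Gallai vertex of G. -/
/-!
Suppose a longest path `a … b` misses `y`. Its ends have all their neighbours on it. If an end
were adjacent to a neighbour `c` of `y` on the path, claw-freeness at `c` and a Pósa rotation
would produce an equally long path starting at `c`, which `y` extends; and connectivity rules
out the edge `a b`, which would close the path into a cycle. Hence `a` and `b` miss `x, y, z`,
so `P_3 + 2P_1`-freeness applied to `x y z` with `a, w` (resp. `b, w`) makes `a` and `b` equal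
or adjacent to `w`, and then `a w b` together with `x, z` induces a `P_3 + 2P_1`.
-/

open SimpleGraph

namespace SimpleGraph.Walk

variable {V : Type*} {G : SimpleGraph V}

lemma exists_eq_append_cons {a b c : V} (p : G.Walk a b) (hc : c ∈ p.support) (hcb : c ≠ b) :
    ∃ (d : V) (q : G.Walk a c) (h : G.Adj c d) (r : G.Walk d b), p = q.append (cons h r) := by
  obtain ⟨q, r, rfl⟩ := p.mem_support_iff_exists_append.mp hc
  obtain ⟨d, h, r, rfl⟩ := r.exists_eq_cons_of_ne hcb
  exact ⟨d, q, h, r, rfl⟩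

end SimpleGraph.Walk

lemma not_free_of_adj_iff {W V : Type*} {H : SimpleGraph W} {G : SimpleGraph V} (f : W → V)
    (hf : Function.Injective f) (hadj : ∀ i j, G.Adj (f i) (f j) ↔ H.Adj i j) :
    ¬ _root_.Free H G :=
  fun hfree => hfree.false ⟨⟨f, hf⟩, hadj _ _⟩

lemma not_free_claw {V : Type*} {G : SimpleGraph V} {c l₁ l₂ l₃ : V}
    (h₁ : G.Adj c l₁) (h₂ : G.Adj c l₂) (h₃ : G.Adj c l₃)
    (h₁₂ : ¬ G.Adj l₁ l₂) (h₁₃ : ¬ G.Adj l₁ l₃) (h₂₃ : ¬ G.Adj l₂ l₃)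
    (n₁₂ : l₁ ≠ l₂) (n₁₃ : l₁ ≠ l₃) (n₂₃ : l₂ ≠ l₃) : ¬ _root_.Free claw G := by
  have := G.ne_of_adj h₁
  have := G.ne_of_adj h₂
  have := G.ne_of_adj h₃
  refine not_free_of_adj_iff (Sum.elim (fun _ => c) ![l₁, l₂, l₃]) ?_ ?_
  · rintro (i | i) (j | j) h <;> fin_cases i <;> try fin_cases j
    all_goals simp_all
  · rintro (i | i) (j | j) <;> fin_cases i <;> try fin_cases j
    all_goals simp_all [claw, G.adj_comm]

lemma not_free_P3_2P1 {V : Type*} {G : SimpleGraph V} {v₀ v₁ v₂ v₃ v₄ : V}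
    (h₀₁ : G.Adj v₀ v₁) (h₁₂ : G.Adj v₁ v₂) (h₀₂ : ¬ G.Adj v₀ v₂)
    (h₀₃ : ¬ G.Adj v₀ v₃) (h₀₄ : ¬ G.Adj v₀ v₄) (h₁₃ : ¬ G.Adj v₁ v₃) (h₁₄ : ¬ G.Adj v₁ v₄)
    (h₂₃ : ¬ G.Adj v₂ v₃) (h₂₄ : ¬ G.Adj v₂ v₄) (h₃₄ : ¬ G.Adj v₃ v₄)
    (n₀₂ : v₀ ≠ v₂) (n₃₄ : v₃ ≠ v₄) : ¬ _root_.Free P3_2P1 G := by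
  have := G.ne_of_adj h₀₁
  have := G.ne_of_adj h₁₂
  have : v₀ ≠ v₃ := fun h => h₁₃ (h ▸ h₀₁.symm)
  have : v₀ ≠ v₄ := fun h => h₁₄ (h ▸ h₀₁.symm)
  have : v₁ ≠ v₃ := fun h => h₀₃ (h ▸ h₀₁)
  have : v₁ ≠ v₄ := fun h => h₀₄ (h ▸ h₀₁)
  have : v₂ ≠ v₃ := fun h => h₁₃ (h ▸ h₁₂)
  have : v₂ ≠ v₄ := fun h => h₁₄ (h ▸ h₁₂)
  refine not_free_of_adj_iff ![v₀, v₁, v₂, v₃, v₄] ?_ ?_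
  · intro i j h
    fin_cases i <;> fin_cases j <;> simp_all
  · intro i j
    fin_cases i <;> fin_cases j <;> simp_all [P3_2P1, G.adj_comm, Sym2.eq, Sym2.rel_iff']

namespace IsLongestPath

variable {V : Type*} {G : SimpleGraph V} {a b : V} {p : G.Walk a b}

lemma reverse (hp : IsLongestPath G p) : IsLongestPath G p.reverse :=
  ⟨hp.1.reverse, fun s t q hq => (Walk.length_reverse p).symm ▸ hp.2 s t q hq⟩

lemma of_support_perm (hp : IsLongestPath G p) {u v : V} (q : G.Walk u v)
    (h : q.support.Perm p.support) : IsLongestPath G q := by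
  have hlen : q.length = p.length := by
    simpa only [Walk.length_support, Nat.add_right_cancel_iff] using h.length_eq
  exact ⟨(Walk.isPath_def q).2 (h.nodup_iff.2 hp.1.support_nodup), hlen ▸ hp.2⟩

lemma false_of_support_perm_cons (hp : IsLongestPath G p) {y : V} (hy : y ∉ p.support)
    {u v : V} (q : G.Walk u v) (h : q.support.Perm (y :: p.support)) : False := by
  have hlen : q.length = p.length + 1 := by
    simpa only [Walk.length_support, List.length_cons, Nat.add_right_cancel_iff] using h.length_eq
  have hq : q.IsPath :=
    (Walk.isPath_def q).2 (h.nodup_iff.2 (List.nodup_cons.2 ⟨hy, hp.1.support_nodup⟩))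
  have := hp.2 u v q hq
  omega

lemma mem_support_of_adj_start (hp : IsLongestPath G p) {u : V} (h : G.Adj a u) :
    u ∈ p.support := by
  by_contra hu
  exact hp.false_of_support_perm_cons hu (Walk.cons h.symm p) (by rw [Walk.support_cons])

lemma mem_support_of_adj_end (hp : IsLongestPath G p) {u : V} (h : G.Adj b u) :
    u ∈ p.support := by
  simpa using hp.reverse.mem_support_of_adj_start h

lemma ne_of_adj (hp : IsLongestPath G p) {u v : V} (h : G.Adj u v) : a ≠ b := by
  rintro rfl
  have := hp.2 u v h.toWalk h.isPath_toWalk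
  rw [Walk.length_eq_zero_iff.mpr (Walk.isPath_iff_nil.mp hp.1)] at this
  simp at this

lemma not_adj_start_end (hp : IsLongestPath G p) (hG : G.Preconnected) {u : V}
    (hu : u ∉ p.support) : ¬ G.Adj a b := by
  intro hab
  obtain ⟨W⟩ := hG u a
  obtain ⟨⟨⟨v, c⟩, hvc⟩, -, hv, hc⟩ :=
    W.exists_boundary_dart {x | x ∉ p.support} hu (by simp)
  simp only [Set.mem_ofPred_eq, not_not] at hv hc
  have hcb : c ≠ b := fun h => hv (hp.mem_support_of_adj_end (h ▸ hvc.symm))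
  obtain ⟨d, q, hcd, r, rfl⟩ := p.exists_eq_append_cons hc hcb
  -- the edge `a b` closes `p` into a cycle, which `v` enters at `c`
  refine hp.false_of_support_perm_cons hv
    (Walk.cons hvc (q.reverse.append (Walk.cons hab r.reverse))) ?_
  simp only [Walk.support_cons, Walk.support_append, Walk.support_reverse, List.tail_cons]
  exact ((List.reverse_perm _).append (List.reverse_perm _)).cons v

lemma not_adj_start_of_adj (hp : IsLongestPath G p) (hclaw : _root_.Free claw G) {y c : V}
    (hy : y ∉ p.support) (hyc : G.Adj y c) : ¬ G.Adj a c := by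
  intro hac
  have hya : y ≠ a := fun h => hy (h ▸ p.start_mem_support)
  have hcb : c ≠ b := fun h => hy (hp.mem_support_of_adj_end (h ▸ hyc.symm))
  obtain ⟨d, q, hcd, r, rfl⟩ := p.exists_eq_append_cons (hp.mem_support_of_adj_start hac) hcb
  have hyd : ¬ G.Adj y d := fun hyd => hp.false_of_support_perm_cons hy
    (q.append (Walk.cons hyc.symm (Walk.cons hyd r))) (by
      simp only [Walk.support_append, Walk.support_cons, List.tail_cons]
      exact List.perm_middle)
  have had : G.Adj a d := by
    by_contra had
    have hnd := hp.1.support_nodup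
    simp only [Walk.support_append, Walk.support_cons, List.tail_cons] at hnd
    have had' : a ≠ d := fun h =>
      List.disjoint_of_nodup_append hnd q.start_mem_support (h ▸ r.start_mem_support)
    exact not_free_claw hyc.symm hac.symm hcd (fun h => hy (hp.mem_support_of_adj_start h.symm))
      hyd had hya (fun h => hy (by simp [h])) had' hclaw
  -- Pósa rotation: `c … a d … b` has the vertices of `p` and starts at the neighbour `c` of `y`
  have hrot : (q.reverse.append (Walk.cons had r)).support.Perm
      (q.append (Walk.cons hcd r)).support := by
    simp only [Walk.support_append, Walk.support_reverse, Walk.support_cons, List.tail_cons]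
    exact (List.reverse_perm _).append_right _
  exact hy (hrot.mem_iff.mp ((hp.of_support_perm _ hrot).mem_support_of_adj_start hyc.symm))

end IsLongestPath

theorem stmt_5_general {V : Type} (G : SimpleGraph V) (hG : G.Connected)
    (h1 : _root_.Free claw G) (h2 : _root_.Free P3_2P1 G)
    (x y z w : V) (hxz : x ≠ z)
    (hxy : G.Adj x y) (hyz : G.Adj y z)
    (hnxz : ¬ G.Adj x z) (hnxw : ¬ G.Adj x w) (hnyw : ¬ G.Adj y w) (hnzw : ¬ G.Adj z w) :
    IsGallaiVertex G y := by
  intro a b p hp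
  by_contra hy
  have endpoint : ∀ {s t : V} (q : G.Walk s t), IsLongestPath G q → y ∉ q.support →
      ¬ G.Adj s x ∧ ¬ G.Adj s z ∧ (G.Adj s w ∨ s = w) := by
    intro s t q hq hyq
    have hsx : ¬ G.Adj s x := hq.not_adj_start_of_adj h1 hyq hxy.symm
    have hsz : ¬ G.Adj s z := hq.not_adj_start_of_adj h1 hyq hyz
    have hys : ¬ G.Adj y s := fun h => hyq (hq.mem_support_of_adj_start h.symm)
    refine ⟨hsx, hsz, ?_⟩
    by_contra! hsw
    exact not_free_P3_2P1 hxy hyz hnxz (fun h => hsx h.symm) hnxw hys hnyw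
      (fun h => hsz h.symm) hnzw hsw.1 hxz hsw.2 h2
  obtain ⟨hax, haz, haw⟩ := endpoint p hp hy
  obtain ⟨hbx, hbz, hbw⟩ := endpoint p.reverse hp.reverse (by simpa using hy)
  have hab : a ≠ b := hp.ne_of_adj hxy
  have hnab : ¬ G.Adj a b := hp.not_adj_start_end hG.preconnected hy
  rcases haw with haw | rfl <;> rcases hbw with hbw | rfl
  · exact not_free_P3_2P1 haw hbw.symm hnab hax haz (fun h => hnxw h.symm)
      (fun h => hnzw h.symm) hbx hbz hnxz hab hxz h2
  · exact hnab haw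
  · exact hnab hbw.symm
  · exact hab rfl

/-- If a connected `(claw, P_3 + 2P_1)`-free graph contains vertices `x, y, z, w`
inducing a `P_3 + P_1` (path `x y z` plus isolated vertex `w`), then `y` is a
Gallai vertex. -/
theorem stmt_5 {V : Type} [Fintype V] (G : SimpleGraph V) (hG : G.Connected)
    (h1 : _root_.Free claw G) (h2 : _root_.Free P3_2P1 G)
    (x y z w : V) (hxz : x ≠ z) (hwx : w ≠ x) (hwy : w ≠ y) (hwz : w ≠ z)
    (hxy : G.Adj x y) (hyz : G.Adj y z)
    (hnxz : ¬ G.Adj x z) (hnxw : ¬ G.Adj x w) (hnyw : ¬ G.Adj y w) (hnzw : ¬ G.Adj z w) :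
    IsGallaiVertex G y :=
  stmt_5_general G hG h1 h2 x y z w hxz hxy hyz hnxz hnxw hnyw hnzw
end

section
/- Every connected (claw, 2P_2 + P_1)-free graph has a Gallai vertex, i.e. a vertex belonging to every longest path. -/
open SimpleGraph

/-!
Let `P = v₀ v₁ … v_{k-1}` be a longest path. If `P` is Hamiltonian then so is every longest
path, and every vertex is a Gallai vertex. Otherwise `v₁` is one. Rerouting a longest path `Q`
through a vertex `w` off `Q`, together with claw-freeness, shows that `w` is adjacent neither to
two consecutive vertices of `Q` nor to its first two or last two vertices. Connectivity then
attaches some outside vertex to the interior of `Q`, which forbids the chords from the first and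
from the second vertex of `Q` to its last one. Feeding these non-adjacencies into induced copies
of `2P₂ + P₁` shows that the vertices off `Q` are pairwise non-adjacent and that each of them has
at most one neighbour on `Q`. So if `v₁` missed a longest path `Q`, its neighbours `v₀` and `v₂`
would both lie on `Q`, and `v₁` would have two neighbours on `Q`.
-/

section

open List

variable {V : Type*} {G : SimpleGraph V}

theorem Free.false_of_adj_iff {W : Type*} {H : SimpleGraph W} (h : _root_.Free H G) (f : W → V)
    (hf : Function.Injective f) (hadj : ∀ i j, G.Adj (f i) (f j) ↔ H.Adj i j) : False :=
  h.false ⟨⟨f, hf⟩, hadj _ _⟩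

theorem Free.adj_of_claw (h : _root_.Free claw G) {c a b d : V} (hca : G.Adj c a)
    (hcb : G.Adj c b) (hcd : G.Adj c d) (hab : a ≠ b) (had : a ≠ d) (hbd : b ≠ d)
    (hnab : ¬ G.Adj a b) (hnad : ¬ G.Adj a d) : G.Adj b d := by
  by_contra hnbd
  refine h.false_of_adj_iff (Sum.elim (fun _ => c) ![a, b, d]) ?_ ?_
  · rintro (i | i) (j | j) hij <;> fin_cases i <;> fin_cases j <;> simp_all [G.ne_of_adj]
  · rintro (i | i) (j | j) <;> fin_cases i <;> fin_cases j <;> simp [claw, G.adj_comm, *]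

/-- The five vertices are automatically distinct: each coincidence would turn one of the
non-adjacencies into one of the two edges. -/
theorem Free.false_of_twoP2_P1 (h : _root_.Free twoP2_P1 G) {a b c d e : V}
    (hab : G.Adj a b) (hcd : G.Adj c d) (hac : ¬ G.Adj a c) (had : ¬ G.Adj a d)
    (hbc : ¬ G.Adj b c) (hbd : ¬ G.Adj b d) (hae : ¬ G.Adj a e) (hbe : ¬ G.Adj b e)
    (hce : ¬ G.Adj c e) (hde : ¬ G.Adj d e) : False := by
  refine h.false_of_adj_iff ![a, b, c, d, e] ?_ ?_
  · intro i j hij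
    fin_cases i <;> fin_cases j <;> simp at hij ⊢ <;> subst hij <;> simp_all [G.adj_comm]
  · intro i j
    fin_cases i <;> fin_cases j <;> simp [twoP2_P1, G.adj_comm, *]

theorem List.getElem_reverse_of_add_eq {α : Type*} {l : List α} {i j : ℕ}
    (hi : i < l.reverse.length) (hj : j < l.length) (h : i + j + 1 = l.length) :
    l.reverse[i] = l[j] := by
  rw [getElem_reverse]
  congr 1
  omega

theorem List.perm_take_append_getElem_last_cons {α : Type*} {l : List α} {n : ℕ}
    (h : n < l.length) : l.take n ++ l[l.length - 1] :: (l.drop n).dropLast ~ l := by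
  have : (l.drop n).dropLast ++ [l[l.length - 1]] = l.drop n := by
    apply ext_getElem <;> grind
  calc _ ~ l.take n ++ ((l.drop n).dropLast ++ [l[l.length - 1]]) :=
        (perm_append_singleton _ _).symm.append_left _
    _ = l := by rw [this, take_append_drop]

theorem SimpleGraph.isChain_adj_reverse {l : List V} (h : l.IsChain G.Adj) :
    l.reverse.IsChain G.Adj :=
  isChain_reverse.2 (h.imp fun _ _ hadj => hadj.symm)

theorem SimpleGraph.Preconnected.exists_adj_of_mem_of_notMem (hG : G.Preconnected) {s : Set V}
    {u v : V} (hu : u ∈ s) (hv : v ∉ s) : ∃ x ∈ s, ∃ y ∉ s, G.Adj x y := by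
  obtain ⟨p⟩ := hG u v
  obtain ⟨d, -, hd₁, hd₂⟩ := p.exists_boundary_dart s hu hv
  exact ⟨d.fst, hd₁, d.snd, hd₂, d.adj⟩

/-- Paths are handled through their vertex lists, where rerouting a path is list surgery: a
rerouted list that is a permutation of `w :: l` and a chain would be a longer path. -/
structure IsLongestPathList (G : SimpleGraph V) (l : List V) : Prop where
  nodup : l.Nodup
  isChain : l.IsChain G.Adj
  length_le : ∀ l' : List V, l'.Nodup → l'.IsChain G.Adj → l'.length ≤ l.length

theorem IsLongestPath.isLongestPathList_support {x y : V} {p : G.Walk x y}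
    (hp : IsLongestPath G p) : IsLongestPathList G p.support := by
  refine ⟨hp.1.support_nodup, p.isChain_adj_support, fun l hnd hc => ?_⟩
  rcases eq_or_ne l [] with rfl | hne
  · simp
  · have := hp.2 _ _ (Walk.ofSupport l hne hc) (by rwa [Walk.isPath_def, Walk.support_ofSupport])
    rw [Walk.length_ofSupport] at this
    rw [p.length_support]
    omega

namespace IsLongestPathList

variable {l l' : List V} {u w x : V}

theorem of_perm (hl : IsLongestPathList G l) (hp : l' ~ l) (hc : l'.IsChain G.Adj) :
    IsLongestPathList G l' :=
  ⟨hp.nodup_iff.2 hl.nodup, hc, hp.length_eq ▸ hl.length_le⟩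

theorem reverse (hl : IsLongestPathList G l) : IsLongestPathList G l.reverse :=
  hl.of_perm (reverse_perm l) (G.isChain_adj_reverse hl.isChain)

theorem length_eq (hl : IsLongestPathList G l) (hl' : IsLongestPathList G l') :
    l.length = l'.length :=
  le_antisymm (hl'.length_le l hl.nodup hl.isChain) (hl.length_le l' hl'.nodup hl'.isChain)

theorem length_pos (hl : IsLongestPathList G l) (u : V) : 0 < l.length :=
  hl.length_le [u] (nodup_singleton u) (isChain_singleton u)

theorem not_isChain_of_perm_cons (hl : IsLongestPathList G l) (hw : w ∉ l) (hp : l' ~ w :: l) :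
    ¬ l'.IsChain G.Adj := fun hc => by
  simpa [hp.length_eq] using hl.length_le l' (hp.nodup_iff.2 (nodup_cons.2 ⟨hw, hl.nodup⟩)) hc

theorem getElem_ne (hl : IsLongestPathList G l) {i j : ℕ} (hi : i < l.length) (hj : j < l.length)
    (hij : i ≠ j) : l[i] ≠ l[j] :=
  fun h => hij (hl.nodup.getElem_inj_iff.1 h)

theorem adj_getElem_succ (hl : IsLongestPathList G l) (i : ℕ) (hi : i + 1 < l.length) :
    G.Adj l[i] l[i + 1] :=
  isChain_iff_getElem.1 hl.isChain i hi

theorem adj_getElem_of_succ_eq (hl : IsLongestPathList G l) {i j : ℕ} (hj : j < l.length)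
    (hij : i + 1 = j) : G.Adj l[i] l[j] := by
  subst hij
  exact hl.adj_getElem_succ i hj

theorem not_adj_getElem_zero (hl : IsLongestPathList G l) (hw : w ∉ l) (h : 0 < l.length) :
    ¬ G.Adj w l[0] := fun hadj =>
  hl.not_isChain_of_perm_cons hw (Perm.refl _)
    (hl.isChain.cons (by simp [head?_eq_getElem?, getElem?_eq_getElem h, hadj]))

theorem not_adj_getElem_last (hl : IsLongestPathList G l) (hw : w ∉ l) (h : 0 < l.length) :
    ¬ G.Adj w l[l.length - 1] := by
  have := hl.reverse.not_adj_getElem_zero (mt mem_reverse.1 hw) (by simpa using h)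
  rwa [getElem_reverse] at this

theorem not_adj_getElem_succ (hl : IsLongestPathList G l) (hw : w ∉ l) {m : ℕ}
    (hm : m + 1 < l.length) (h : G.Adj w l[m]) : ¬ G.Adj w l[m + 1] := fun h' => by
  refine hl.not_isChain_of_perm_cons hw (l' := l.take (m + 1) ++ w :: l.drop (m + 1))
    (perm_middle.trans (by rw [take_append_drop])) ?_
  refine (hl.isChain.take _).append ((hl.isChain.drop _).cons ?_) ?_ <;>
    simp (disch := omega) [getLast?_take, h.symm, h']

theorem adj_getElem_add_two_of_adj (hl : IsLongestPathList G l) (hc : _root_.Free claw G)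
    (hw : w ∉ l) {m : ℕ} (hm : m + 2 < l.length) (h : G.Adj w l[m + 1]) :
    G.Adj l[m] l[m + 2] :=
  hc.adj_of_claw h.symm (hl.adj_getElem_succ m (by omega)).symm (hl.adj_getElem_succ (m + 1) hm)
    (ne_of_mem_of_not_mem (getElem_mem _) hw).symm (ne_of_mem_of_not_mem (getElem_mem _) hw).symm
    (hl.getElem_ne _ _ (by omega)) (fun h' => hl.not_adj_getElem_succ hw (by omega) h' h)
    (hl.not_adj_getElem_succ hw hm h)

theorem not_adj_getElem_zero_of_adj (hl : IsLongestPathList G l) (hc : _root_.Free claw G)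
    (hw : w ∉ l) {m : ℕ} (hm : m + 2 < l.length) (h : G.Adj w l[m + 1]) :
    ¬ G.Adj l[m + 1] l[0] := fun h0 => by
  have hperm : l[m + 1] :: (l.take (m + 1) ++ l.drop (m + 2)) ~ l := by
    refine perm_middle.symm.trans ?_
    rw [← drop_eq_getElem_cons, take_append_drop]
  refine hl.not_isChain_of_perm_cons hw (hperm.cons w) ?_
  have hjoin := hl.adj_getElem_add_two_of_adj hc hw hm h
  have hhead : l.head? = some l[0] := by simp [head?_eq_getElem?]
  refine (((hl.isChain.take _).append (hl.isChain.drop _) ?_).cons ?_).cons ?_ <;>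
    simp (disch := omega) [getLast?_take, head?_take, *]

theorem not_adj_getElem_one (hl : IsLongestPathList G l) (hc : _root_.Free claw G) (hw : w ∉ l)
    (h : 1 < l.length) : ¬ G.Adj w l[1] := fun h1 => by
  rcases (by omega : l.length = 2 ∨ 2 < l.length) with h2 | h2
  · exact hl.not_adj_getElem_last hw (by omega) (by simpa [h2] using h1)
  · exact hl.not_adj_getElem_zero_of_adj hc hw (m := 0) h2 h1 (hl.adj_getElem_succ 0 h).symm

theorem not_adj_getElem_last_of_adj (hl : IsLongestPathList G l) (hc : _root_.Free claw G)
    (hw : w ∉ l) {m : ℕ} (hm : m + 2 < l.length) (h : G.Adj w l[m + 1]) :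
    ¬ G.Adj l[m + 1] l[l.length - 1] := by
  have e : l.reverse[l.length - 3 - m + 1]'(by simp; omega) = l[m + 1] :=
    getElem_reverse_of_add_eq _ _ (by omega)
  have e0 : l.reverse[0]'(by simp; omega) = l[l.length - 1] :=
    getElem_reverse_of_add_eq _ _ (by omega)
  rw [← e, ← e0]
  exact hl.reverse.not_adj_getElem_zero_of_adj hc (mt mem_reverse.1 hw) (by simp; omega)
    (by rwa [e])

theorem not_adj_getElem_sub_two (hl : IsLongestPathList G l) (hc : _root_.Free claw G)
    (hw : w ∉ l) (h : 1 < l.length) : ¬ G.Adj w l[l.length - 2] := by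
  have e : l.reverse[1]'(by simp; omega) = l[l.length - 2] :=
    getElem_reverse_of_add_eq _ _ (by omega)
  rw [← e]
  exact hl.reverse.not_adj_getElem_one hc (mt mem_reverse.1 hw) (by simpa using h)

theorem exists_notMem_adj (hl : IsLongestPathList G l) (hG : G.Preconnected) (hu : u ∉ l) :
    ∃ w ∉ l, ∃ m, ∃ hm : m < l.length, G.Adj w l[m] := by
  obtain ⟨w, hw, y, hy, hwy⟩ := hG.exists_adj_of_mem_of_notMem (s := {v | v ∉ l}) hu
    (v := l[0]'(hl.length_pos u)) (by simp)
  obtain ⟨m, hm, rfl⟩ := mem_iff_getElem.1 (by simpa using hy)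
  exact ⟨w, hw, m, hm, hwy⟩

theorem exists_notMem_adj_getElem_add_two (hl : IsLongestPathList G l)
    (hc : _root_.Free claw G) (hG : G.Preconnected) (hu : u ∉ l) :
    ∃ w ∉ l, ∃ m, ∃ hm : m + 4 < l.length, G.Adj w l[m + 2] := by
  obtain ⟨w, hw, m, hm, hwm⟩ := hl.exists_notMem_adj hG hu
  have h0 : m ≠ 0 := by rintro rfl; exact hl.not_adj_getElem_zero hw _ hwm
  have h1 : m ≠ 1 := by rintro rfl; exact hl.not_adj_getElem_one hc hw _ hwm
  have h2 : m ≠ l.length - 1 := by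
    rintro rfl; exact hl.not_adj_getElem_last hw (by omega) hwm
  have h3 : m ≠ l.length - 2 := by
    rintro rfl; exact hl.not_adj_getElem_sub_two hc hw (by omega) hwm
  obtain ⟨j, rfl⟩ : ∃ j, m = j + 2 := ⟨m - 2, by omega⟩
  exact ⟨w, hw, j, by omega, hwm⟩

theorem not_adj_getElem_zero_last (hl : IsLongestPathList G l) (hG : G.Preconnected)
    (hu : u ∉ l) (h : 0 < l.length) : ¬ G.Adj l[0] l[l.length - 1] := fun h0 => by
  obtain ⟨w, hw, m, hm, hwm⟩ := hl.exists_notMem_adj hG hu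
  have hperm : (l.take (m + 1)).reverse ++ (l.drop (m + 1)).reverse ~ l :=
    ((reverse_perm _).append (reverse_perm _)).trans (by rw [take_append_drop])
  refine hl.not_isChain_of_perm_cons hw (hperm.cons w) ?_
  have hhead : l.head? = some l[0] := by simp [head?_eq_getElem?]
  have hlast : l.getLast? = some l[l.length - 1] := by simp [getLast?_eq_getElem?]
  refine (((G.isChain_adj_reverse (hl.isChain.take _)).append
    (G.isChain_adj_reverse (hl.isChain.drop _)) ?_).cons ?_) <;>
    simp (disch := omega) [getLast?_take, getLast?_drop, head?_take, *]

theorem not_adj_getElem_zero_succ_of_adj (hl : IsLongestPathList G l) (hw : w ∉ l) {m : ℕ}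
    (hm : m + 1 < l.length) (h : G.Adj w l[m]) : ¬ G.Adj l[0] l[m + 1] := fun h0 => by
  have hperm : (l.take (m + 1)).reverse ++ l.drop (m + 1) ~ l :=
    ((reverse_perm _).append_right _).trans (by rw [take_append_drop])
  have hhead : l.head? = some l[0] := by simp [head?_eq_getElem?]
  have hl' := hl.of_perm hperm ((G.isChain_adj_reverse (hl.isChain.take _)).append
    (hl.isChain.drop _) (by simp (disch := omega) [head?_take, hhead, h0]))
  have e : ((l.take (m + 1)).reverse ++ l.drop (m + 1))[0]'(by simp; omega) = l[m] := by grind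
  exact hl'.not_adj_getElem_zero (by simpa [hperm.mem_iff]) (by simp; omega) (e ▸ h)

theorem not_adj_getElem_zero_two (hl : IsLongestPathList G l) (hG : G.Preconnected) (hu : u ∉ l)
    (h : 2 < l.length) (h1 : G.Adj l[1] l[l.length - 1]) : ¬ G.Adj l[0] l[2] := fun h02 => by
  have hperm : l[1] :: l[0] :: l.drop 2 ~ l := by
    have : l = l[0] :: l[1] :: l.drop 2 := by apply ext_getElem <;> grind
    exact (Perm.swap _ _ _).trans (by rw [← this])
  have hl' := hl.of_perm hperm <| (((hl.isChain.drop 2).cons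
    (by simp (disch := omega) [h02])).cons (by simp [(hl.adj_getElem_succ 0 (by omega)).symm]))
  have e : (l[1] :: l[0] :: l.drop 2)[(l[1] :: l[0] :: l.drop 2).length - 1]'(by simp) =
      l[l.length - 1] := by grind
  have := hl'.not_adj_getElem_zero_last hG (u := u) (by simpa [hperm.mem_iff]) (by simp)
  rw [e] at this
  exact this h1

theorem not_adj_getElem_one_last (hl : IsLongestPathList G l) (hc : _root_.Free claw G)
    (h2 : _root_.Free twoP2_P1 G) (hG : G.Preconnected) (hu : u ∉ l) (h : 1 < l.length) :
    ¬ G.Adj l[1] l[l.length - 1] := fun h1 => by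
  obtain ⟨w, hw, m, hm, hwm⟩ := hl.exists_notMem_adj_getElem_add_two hc hG hu
  have h2last : G.Adj l[2] l[l.length - 1] :=
    hc.adj_of_claw (hl.adj_getElem_succ 0 h).symm (hl.adj_getElem_succ 1 (by omega)) h1
      (hl.getElem_ne _ _ (by omega)) (hl.getElem_ne _ _ (by omega))
      (hl.getElem_ne _ _ (by omega)) (hl.not_adj_getElem_zero_two hG hu (by omega) h1)
      (hl.not_adj_getElem_zero_last hG hu _)
  -- `Y = v₀ v₁ v_{k-1} v₂ v₃ … v_{k-2}` is another longest path.
  have hperm := perm_take_append_getElem_last_cons (l := l) (n := 2) (by omega)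
  have hY := hl.of_perm hperm <| ((hl.isChain.take 2).append
    (((hl.isChain.drop 2).dropLast).cons
      (by simp (disch := omega) [head?_dropLast, h2last.symm]))
    (by simp (disch := omega) [getLast?_take, h1]))
  set Y := l.take 2 ++ l[l.length - 1] :: (l.drop 2).dropLast
  have hwY : w ∉ Y := by simpa [hperm.mem_iff]
  have eY0 : Y[0]'(by grind) = l[0] := by grind
  have eYm : Y[m + 3]'(by grind) = l[m + 2] := by grind
  have eYlast : Y[Y.length - 1]'(by grind) = l[l.length - 2] := by grind
  have hbd := hY.not_adj_getElem_last_of_adj hc hwY (m := m + 2) (by grind) (by rwa [eYm])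
  have hbe := hY.not_adj_getElem_zero_last hG hwY (by grind)
  rw [eYm, eYlast] at hbd
  rw [eY0, eYlast] at hbe
  exact h2.false_of_twoP2_P1 (a := l[l.length - 1]) (b := l[l.length - 2]) (c := w)
    (d := l[m + 2]) (e := l[0]) (hl.adj_getElem_of_succ_eq _ (by omega)).symm hwm
    (fun h => hl.not_adj_getElem_last hw (by omega) h.symm)
    (fun h => hl.not_adj_getElem_last_of_adj hc hw (m := m + 1) (by omega) hwm h.symm)
    (fun h' => hl.not_adj_getElem_sub_two hc hw h h'.symm) (fun h => hbd h.symm)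
    (fun h => hl.not_adj_getElem_zero_last hG hu (by omega) h.symm) (fun h => hbe h.symm)
    (hl.not_adj_getElem_zero hw (by omega))
    (hl.not_adj_getElem_zero_of_adj hc hw (m := m + 1) (by omega) hwm)

theorem not_adj_of_notMem (hl : IsLongestPathList G l) (hc : _root_.Free claw G)
    (h2 : _root_.Free twoP2_P1 G) (hG : G.Preconnected) (hw : w ∉ l) (hx : x ∉ l) :
    ¬ G.Adj w x := fun hwx => by
  obtain ⟨-, -, m, hm, -⟩ := hl.exists_notMem_adj_getElem_add_two hc hG hw
  exact h2.false_of_twoP2_P1 hwx (hl.adj_getElem_succ 0 (by omega))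
    (hl.not_adj_getElem_zero hw (by omega)) (hl.not_adj_getElem_one hc hw (by omega))
    (hl.not_adj_getElem_zero hx (by omega)) (hl.not_adj_getElem_one hc hx (by omega))
    (hl.not_adj_getElem_last hw (by omega)) (hl.not_adj_getElem_last hx (by omega))
    (hl.not_adj_getElem_zero_last hG hw (by omega))
    (hl.not_adj_getElem_one_last hc h2 hG hw (by omega))

theorem adj_getElem_one_of_adj (hl : IsLongestPathList G l) (hc : _root_.Free claw G)
    (h2 : _root_.Free twoP2_P1 G) (hG : G.Preconnected) (hw : w ∉ l) {m : ℕ}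
    (hm : m + 2 < l.length) (h : G.Adj w l[m + 1]) : G.Adj l[1] l[m + 1] := by
  by_contra h1
  exact h2.false_of_twoP2_P1 (hl.adj_getElem_succ 0 (by omega)) h
    (fun h' => hl.not_adj_getElem_zero hw (by omega) h'.symm)
    (fun h' => hl.not_adj_getElem_zero_of_adj hc hw hm h h'.symm)
    (fun h' => hl.not_adj_getElem_one hc hw (by omega) h'.symm) h1
    (hl.not_adj_getElem_zero_last hG hw (by omega))
    (hl.not_adj_getElem_one_last hc h2 hG hw (by omega))
    (hl.not_adj_getElem_last hw (by omega)) (hl.not_adj_getElem_last_of_adj hc hw hm h)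

theorem adj_getElem_one_succ_of_adj (hl : IsLongestPathList G l) (hc : _root_.Free claw G)
    (h2 : _root_.Free twoP2_P1 G) (hG : G.Preconnected) (hw : w ∉ l) {m : ℕ}
    (hm : m + 2 < l.length) (h : G.Adj w l[m + 1]) : G.Adj l[1] l[m + 2] :=
  hc.adj_of_claw h.symm (hl.adj_getElem_one_of_adj hc h2 hG hw hm h).symm
    (hl.adj_getElem_succ (m + 1) hm) (ne_of_mem_of_not_mem (getElem_mem _) hw).symm
    (ne_of_mem_of_not_mem (getElem_mem _) hw).symm (hl.getElem_ne _ _ (by omega))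
    (hl.not_adj_getElem_one hc hw (by omega)) (hl.not_adj_getElem_succ hw hm h)

theorem not_adj_getElem_of_lt (hl : IsLongestPathList G l) (hc : _root_.Free claw G)
    (h2 : _root_.Free twoP2_P1 G) (hG : G.Preconnected) (hw : w ∉ l) {a b : ℕ} (hab : a < b)
    (hb : b < l.length) (hwa : G.Adj w l[a]) : ¬ G.Adj w l[b] := fun hwb => by
  have ha0 : a ≠ 0 := by rintro rfl; exact hl.not_adj_getElem_zero hw (by omega) hwa
  have hb1 : b ≠ l.length - 1 := by rintro rfl; exact hl.not_adj_getElem_last hw (by omega) hwb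
  obtain ⟨a, rfl⟩ : ∃ a', a = a' + 1 := ⟨a - 1, by omega⟩
  obtain ⟨b, rfl⟩ : ∃ b', b = b' + 1 := ⟨b - 1, by omega⟩
  have hjoin : G.Adj l[a + 2] l[b + 2] :=
    hc.adj_of_claw (hl.adj_getElem_succ 0 (by omega)).symm
      (hl.adj_getElem_one_succ_of_adj hc h2 hG hw (by omega) hwa)
      (hl.adj_getElem_one_succ_of_adj hc h2 hG hw (by omega) hwb)
      (hl.getElem_ne _ _ (by omega)) (hl.getElem_ne _ _ (by omega))
      (hl.getElem_ne _ _ (by omega))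
      (hl.not_adj_getElem_zero_succ_of_adj hw (by omega) hwa)
      (hl.not_adj_getElem_zero_succ_of_adj hw (by omega) hwb)
  set s := (l.take (b + 2)).drop (a + 2)
  have hperm : l.take (a + 2) ++ w :: (s.reverse ++ l.drop (b + 2)) ~ w :: l := by
    have : s ++ l.drop (b + 2) = l.drop (a + 2) := by apply ext_getElem <;> grind
    refine perm_middle.trans (Perm.cons _ ?_)
    calc _ ~ l.take (a + 2) ++ (s ++ l.drop (b + 2)) :=
          ((reverse_perm s).append_right _).append_left _
      _ = l := by rw [this, take_append_drop]
  -- `v₀ … v_{a+1} w v_{b+1} v_b … v_{a+2} v_{b+2} …` would be a longer path.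
  refine hl.not_isChain_of_perm_cons hw hperm ((hl.isChain.take _).append
    (((G.isChain_adj_reverse ((hl.isChain.take _).drop _)).append
      (hl.isChain.drop _) ?_).cons ?_) ?_)
  · simp (disch := omega) [hjoin]
  · simp (disch := omega) [getLast?_take, getLast?_drop]
    rw [if_neg (by omega)]
    exact hwb
  · simp (disch := omega) [getLast?_take, hwa.symm]

theorem eq_of_adj_of_adj (hl : IsLongestPathList G l) (hc : _root_.Free claw G)
    (h2 : _root_.Free twoP2_P1 G) (hG : G.Preconnected) (hw : w ∉ l) {a b : ℕ}
    (ha : a < l.length) (hb : b < l.length) (hwa : G.Adj w l[a]) (hwb : G.Adj w l[b]) :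
    a = b := by
  by_contra hne
  rcases Nat.lt_or_gt_of_ne hne with hab | hab
  · exact hl.not_adj_getElem_of_lt hc h2 hG hw hab hb hwa hwb
  · exact hl.not_adj_getElem_of_lt hc h2 hG hw hab ha hwb hwa

theorem getElem_one_mem (hl : IsLongestPathList G l) (hc : _root_.Free claw G)
    (h2 : _root_.Free twoP2_P1 G) (hG : G.Preconnected) (hl' : IsLongestPathList G l')
    (h : 2 < l.length) : l[1] ∈ l' := by
  by_contra h1
  have mem_of_adj {i : ℕ} (hi : i < l.length) (hadj : G.Adj l[1] l[i]) : l[i] ∈ l' := by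
    by_contra hi'
    exact hl'.not_adj_of_notMem hc h2 hG h1 hi' hadj
  have h10 := (hl.adj_getElem_succ 0 (by omega)).symm
  have h12 := hl.adj_getElem_succ 1 h
  obtain ⟨a, ha, ha'⟩ := mem_iff_getElem.1 (mem_of_adj _ h10)
  obtain ⟨b, hb, hb'⟩ := mem_iff_getElem.1 (mem_of_adj _ h12)
  obtain rfl := hl'.eq_of_adj_of_adj hc h2 hG h1 ha hb (ha' ▸ h10) (hb' ▸ h12)
  exact hl.getElem_ne (i := 0) (j := 2) _ _ (by omega) (ha'.symm.trans hb')

theorem mem_of_forall_mem [Fintype V] (hl : IsLongestPathList G l) (htr : ∀ u, u ∈ l)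
    (hl' : IsLongestPathList G l') (v : V) : v ∈ l' := by
  classical
  by_contra hv
  have hcard := (nodup_cons.2 ⟨hv, hl'.nodup⟩).length_le_card
  have : Fintype.card V ≤ l.length :=
    (Finset.card_le_card fun v _ => mem_toFinset.2 (htr v)).trans (toFinset_card_le l)
  simp only [length_cons] at hcard
  have := hl.length_eq hl'
  omega

end IsLongestPathList

end

/-- Every connected `(claw, 2P_2 + P_1)`-free graph has a Gallai vertex. -/
theorem stmt_7 {V : Type} [Fintype V] (G : SimpleGraph V) (hG : G.Connected)
    (h1 : _root_.Free claw G) (h2 : _root_.Free twoP2_P1 G) :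
    ∃ v : V, IsGallaiVertex G v := by
  have := hG.nonempty
  obtain ⟨x, y, p, hp, hmax⟩ := Walk.exists_isPath_forall_isPath_length_le_length G
  have hl := IsLongestPath.isLongestPathList_support ⟨hp, hmax⟩
  by_cases htr : ∀ u, u ∈ p.support
  · exact ⟨x, fun _ _ q hq => hl.mem_of_forall_mem htr hq.isLongestPathList_support x⟩
  · push Not at htr
    obtain ⟨u, hu⟩ := htr
    obtain ⟨-, -, m, hm, -⟩ := hl.exists_notMem_adj_getElem_add_two h1 hG.preconnected hu
    exact ⟨p.support[1], fun _ _ q hq =>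
      hl.getElem_one_mem h1 h2 hG.preconnected hq.isLongestPathList_support (by omega)⟩
end

section
/- Let G be a (P_5, triangle)-free graph. Then every connected component of G is either a 5-ring or a bipartite graph. -/
open SimpleGraph

/-!
Fix a root `r` of a connected `(P₅, K₃)`-free graph. If no edge joins two vertices at the same
distance from `r`, the parity of that distance is a proper 2-colouring. Otherwise walk back from
the ends `u`, `v` of such an edge towards `r`: with predecessors `u₁`, `v₁` and a predecessor
`u₂` of `u₁`, either `u₁v₁` is such an edge closer to `r`, or `u₂ u₁ u v v₁` closes up into a
5-cycle, or it is an induced `P₅`.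

Around a 5-cycle `f`, let class `i` consist of the common neighbours of `f (i - 1)` and
`f (i + 1)`. Triangle-freeness makes the classes stable, disjoint and anticomplete at distance
two; `P₅`-freeness makes consecutive classes complete and puts every neighbour of a class vertex
into a class, so by connectivity the classes cover the graph.
-/

theorem Free.comap {W V V' : Type*} {H : SimpleGraph W} {G : SimpleGraph V}
    {G' : SimpleGraph V'} (e : G' ↪g G) (h : _root_.Free H G) : _root_.Free H G' :=
  ⟨fun φ => h.false (e.comp φ)⟩

theorem cliqueFree_of_free_top {V : Type*} {G : SimpleGraph V} {n : ℕ}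
    (h : _root_.Free (⊤ : SimpleGraph (Fin n)) G) : G.CliqueFree n := by
  by_contra hn
  exact h.false (topEmbeddingOfNotCliqueFree hn)

namespace SimpleGraph

variable {V : Type*} {G : SimpleGraph V}

theorem CliqueFree.not_adj_of_adj_of_adj (hK : G.CliqueFree 3) {a b c : V}
    (hab : G.Adj a b) (hbc : G.Adj b c) : ¬G.Adj a c := fun hac =>
  isIndepSet_neighborSet_of_triangleFree _ hK b hab.symm hbc hac.ne hac

theorem Reachable.mem_of_forall_adj_mem {s : Set V} {u v : V} (h : G.Reachable u v)
    (hs : ∀ x y, x ∈ s → G.Adj x y → y ∈ s) (hu : u ∈ s) : v ∈ s := by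
  obtain ⟨p⟩ := h
  induction p with
  | nil => exact hu
  | cons hadj _ ih => exact ih (hs _ _ hu hadj)

theorem exists_adj_dist_eq_of_dist_eq_succ {r u : V} {d : ℕ} (h : G.dist r u = d + 1) :
    ∃ w, G.Adj u w ∧ G.dist r w = d := by
  obtain ⟨p, hp⟩ :=
    (Reachable.of_dist_ne_zero (by omega : G.dist r u ≠ 0)).symm.exists_walk_length_eq_dist
  rw [dist_comm] at hp
  cases p with
  | nil => simp at h
  | cons hadj q =>
    refine ⟨_, hadj, ?_⟩
    have hq := dist_le q.reverse
    have hstep := hadj.diff_dist_adj (u := r)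
    rw [Walk.length_reverse] at hq
    rw [Walk.length_cons] at hp
    omega

theorem pathGraph_five_eq_of_adj_iff {i j : Fin 5}
    (h : ∀ k, (pathGraph 5).Adj i k ↔ (pathGraph 5).Adj j k) : i = j := by
  revert i j
  simp only [pathGraph_adj]
  decide

theorem _root_.Free.false_of_path_five (hP : _root_.Free (pathGraph 5) G) (hK : G.CliqueFree 3)
    {a b c d e : V} (hab : G.Adj a b) (hbc : G.Adj b c) (hcd : G.Adj c d) (hde : G.Adj d e)
    (had : ¬G.Adj a d) (hae : ¬G.Adj a e) (hbe : ¬G.Adj b e) : False := by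
  have hac := hK.not_adj_of_adj_of_adj hab hbc
  have hbd := hK.not_adj_of_adj_of_adj hbc hcd
  have hce := hK.not_adj_of_adj_of_adj hcd hde
  have hadj : ∀ i j,
      G.Adj (![a, b, c, d, e] i) (![a, b, c, d, e] j) ↔ (pathGraph 5).Adj i j := by
    intro i j
    fin_cases i <;> fin_cases j <;>
      simp [pathGraph_adj, G.adj_comm, hab, hbc, hcd, hde, had, hae, hbe, hac, hbd, hce]
  refine hP.false ⟨⟨![a, b, c, d, e], fun i j hij => ?_⟩, hadj _ _⟩
  exact pathGraph_five_eq_of_adj_iff fun k => by rw [← hadj, ← hadj, hij]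

theorem exists_closed_walk_five_of_adj_of_dist_eq (hP : _root_.Free (pathGraph 5) G)
    (hK : G.CliqueFree 3) (r : V) (d : ℕ) {u v : V} (huv : G.Adj u v)
    (hu : G.dist r u = d + 1) (hv : G.dist r v = d + 1) :
    ∃ f : Fin 5 → V, ∀ i, G.Adj (f i) (f (i + 1)) := by
  induction d generalizing u v with
  | zero =>
    rw [zero_add, dist_eq_one_iff_adj] at hu hv
    exact (hK.not_adj_of_adj_of_adj hu.symm hv huv).elim
  | succ d ih =>
    obtain ⟨u₁, hu₁, hdu₁⟩ := exists_adj_dist_eq_of_dist_eq_succ hu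
    obtain ⟨v₁, hv₁, hdv₁⟩ := exists_adj_dist_eq_of_dist_eq_succ hv
    by_cases h₁ : G.Adj u₁ v₁
    · exact ih h₁ hdu₁ hdv₁
    obtain ⟨u₂, hu₂, hdu₂⟩ := exists_adj_dist_eq_of_dist_eq_succ hdu₁
    by_cases h₂ : G.Adj u₂ v₁
    · refine ⟨![u₂, u₁, u, v, v₁], fun i => ?_⟩
      fin_cases i
      exacts [hu₂.symm, hu₁.symm, huv, hv₁, h₂.symm]
    have hu₂v : ¬G.Adj u₂ v := fun h => by
      have := h.diff_dist_adj (u := r)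
      omega
    exact (hP.false_of_path_five hK hu₂.symm hu₁.symm huv hv₁ hu₂v h₂ h₁).elim

section FiveRing

variable (G) in
def ringPart (f : Fin 5 → V) (i : Fin 5) : Set V :=
  {v | G.Adj v (f (i - 1)) ∧ G.Adj v (f (i + 1))}

variable {f : Fin 5 → V}

theorem adj_of_eq_add_one (hf : ∀ i, G.Adj (f i) (f (i + 1))) (i j : Fin 5)
    (h : j = i + 1 ∨ i = j + 1) : G.Adj (f i) (f j) := by
  rcases h with rfl | rfl
  exacts [hf i, (hf j).symm]

theorem mem_ringPart_self (hf : ∀ i, G.Adj (f i) (f (i + 1))) (i : Fin 5) :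
    f i ∈ ringPart G f i :=
  ⟨adj_of_eq_add_one hf _ _ (by simp), hf i⟩

theorem adj_iff_of_mem_ringPart (hK : G.CliqueFree 3) (hf : ∀ i, G.Adj (f i) (f (i + 1)))
    {v : V} {i : Fin 5} (hv : v ∈ ringPart G f i) (k : Fin 5) :
    G.Adj v (f k) ↔ k = i - 1 ∨ k = i + 1 := by
  refine ⟨fun hvk => ?_, by rintro (rfl | rfl); exacts [hv.1, hv.2]⟩
  by_contra hk
  obtain rfl | rfl | rfl : k = i ∨ k = i + 2 ∨ k = i - 2 := by grind
  · exact hK.not_adj_of_adj_of_adj hvk (hf k) hv.2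
  · exact hK.not_adj_of_adj_of_adj hv.2 (adj_of_eq_add_one hf _ _ (by grind)) hvk
  · exact hK.not_adj_of_adj_of_adj hv.1 (adj_of_eq_add_one hf _ _ (by grind)) hvk

theorem eq_of_mem_ringPart (hK : G.CliqueFree 3) (hf : ∀ i, G.Adj (f i) (f (i + 1)))
    {v : V} {i j : Fin 5} (hi : v ∈ ringPart G f i) (hj : v ∈ ringPart G f j) : i = j := by
  have h₁ := (adj_iff_of_mem_ringPart hK hf hi _).1 hj.1
  have h₂ := (adj_iff_of_mem_ringPart hK hf hi _).1 hj.2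
  grind

theorem not_adj_of_mem_ringPart (hK : G.CliqueFree 3) {u v : V} {i : Fin 5}
    (hu : u ∈ ringPart G f i) (hv : v ∈ ringPart G f i) : ¬G.Adj u v :=
  hK.not_adj_of_adj_of_adj hu.2 hv.2.symm

theorem not_adj_of_mem_ringPart_add_two (hK : G.CliqueFree 3)
    (hf : ∀ i, G.Adj (f i) (f (i + 1))) {u v : V} {i : Fin 5} (hu : u ∈ ringPart G f i)
    (hv : v ∈ ringPart G f (i + 2)) : ¬G.Adj u v :=
  hK.not_adj_of_adj_of_adj hu.2 ((adj_iff_of_mem_ringPart hK hf hv _).2 (by grind)).symm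

theorem adj_of_mem_ringPart_add_one (hP : _root_.Free (pathGraph 5) G) (hK : G.CliqueFree 3)
    (hf : ∀ i, G.Adj (f i) (f (i + 1))) {u v : V} {i : Fin 5} (hu : u ∈ ringPart G f i)
    (hv : v ∈ ringPart G f (i + 1)) : G.Adj u v := by
  by_contra huv
  have hvk := adj_iff_of_mem_ringPart hK hf hv
  have huk := adj_iff_of_mem_ringPart hK hf hu
  exact hP.false_of_path_five hK ((hvk (i + 2)).2 (by grind))
    (adj_of_eq_add_one hf (i + 2) (i + 3) (by grind))
    (adj_of_eq_add_one hf (i + 3) (i + 4) (by grind)) ((huk (i + 4)).2 (by grind)).symm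
    (mt (hvk (i + 4)).1 (by grind)) (fun h => huv h.symm)
    (mt (huk (i + 2)).1 (by grind) ∘ G.adj_symm)

theorem exists_mem_ringPart_of_adj (hP : _root_.Free (pathGraph 5) G) (hK : G.CliqueFree 3)
    (hf : ∀ i, G.Adj (f i) (f (i + 1))) {u : V} {t : Fin 5} (hu : G.Adj u (f t)) :
    ∃ j, u ∈ ringPart G f j := by
  by_cases h₂ : G.Adj u (f (t + 2))
  · exact ⟨t + 1, by rwa [add_sub_cancel_right], by rwa [show t + 1 + 1 = t + 2 by grind]⟩
  by_cases h₃ : G.Adj u (f (t + 3))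
  · exact ⟨t + 4, by rwa [show t + 4 - 1 = t + 3 by grind],
      by rwa [show t + 4 + 1 = t by grind]⟩
  have hft := adj_iff_of_mem_ringPart hK hf (mem_ringPart_self hf t) (t + 3)
  exact (hP.false_of_path_five hK hu (hf t) (adj_of_eq_add_one hf (t + 1) (t + 2) (by grind))
    (adj_of_eq_add_one hf (t + 2) (t + 3) (by grind)) h₂ h₃ (mt hft.1 (by grind))).elim

theorem exists_mem_ringPart_of_adj_mem (hP : _root_.Free (pathGraph 5) G) (hK : G.CliqueFree 3)
    (hf : ∀ i, G.Adj (f i) (f (i + 1))) {u v : V} {i : Fin 5} (hv : v ∈ ringPart G f i)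
    (hvu : G.Adj v u) : ∃ j, u ∈ ringPart G f j := by
  by_cases h : ∃ t, G.Adj u (f t)
  · obtain ⟨t, ht⟩ := h
    exact exists_mem_ringPart_of_adj hP hK hf ht
  push Not at h
  exact (hP.false_of_path_five hK hvu.symm hv.2 (adj_of_eq_add_one hf (i + 1) (i + 2) (by grind))
    (adj_of_eq_add_one hf (i + 2) (i + 3) (by grind)) (h _) (h _)
    (mt (adj_iff_of_mem_ringPart hK hf hv (i + 3)).1 (by grind))).elim

end FiveRing

theorem Connected.is5Ring_of_closed_walk_five (hG : G.Connected)
    (hP : _root_.Free (pathGraph 5) G) (hK : G.CliqueFree 3) {f : Fin 5 → V}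
    (hf : ∀ i, G.Adj (f i) (f (i + 1))) : Is5Ring G := by
  refine ⟨ringPart G f, fun i => ⟨f i, mem_ringPart_self hf i⟩, fun v => ?_,
    fun i u hu v hv => not_adj_of_mem_ringPart hK hu hv,
    fun i u hu v hv => adj_of_mem_ringPart_add_one hP hK hf hu hv,
    fun i u hu v hv => not_adj_of_mem_ringPart_add_two hK hf hu hv⟩
  obtain ⟨i, hi⟩ : ∃ i, v ∈ ringPart G f i :=
    (hG.preconnected (f 0) v).mem_of_forall_adj_mem
      (s := {x | ∃ i, x ∈ ringPart G f i})
      (fun x y ⟨i, hx⟩ hxy => exists_mem_ringPart_of_adj_mem hP hK hf hx hxy)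
      ⟨0, mem_ringPart_self hf 0⟩
  exact ⟨i, hi, fun j hj => eq_of_mem_ringPart hK hf hj hi⟩

theorem Connected.is5Ring_or_colorable_two (hG : G.Connected)
    (hP : _root_.Free (pathGraph 5) G) (hK : G.CliqueFree 3) : Is5Ring G ∨ G.Colorable 2 := by
  obtain ⟨r⟩ := hG.nonempty
  by_cases h : ∃ u v, G.Adj u v ∧ G.dist r u = G.dist r v
  · obtain ⟨u, v, huv, hd⟩ := h
    have hu₀ : G.dist r u ≠ 0 := fun h₀ =>
      huv.ne ((hG.dist_eq_zero_iff.1 h₀).symm.trans (hG.dist_eq_zero_iff.1 (hd ▸ h₀)))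
    obtain ⟨d, hu⟩ := Nat.exists_eq_add_one_of_ne_zero hu₀
    obtain ⟨f, hf⟩ := exists_closed_walk_five_of_adj_of_dist_eq hP hK r d huv hu (hd ▸ hu)
    exact Or.inl (hG.is5Ring_of_closed_walk_five hP hK hf)
  · push Not at h
    refine Or.inr ⟨Coloring.mk (fun v => ⟨G.dist r v % 2, Nat.mod_lt _ two_pos⟩)
      fun {u v} huv => ?_⟩
    have hstep := huv.diff_dist_adj (u := r)
    have hne := h u v huv
    simp only [ne_eq, Fin.mk.injEq]
    omega

end SimpleGraph

theorem stmt_13_general {V : Type} (G : SimpleGraph V)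
    (h1 : _root_.Free (pathGraph 5) G) (h2 : _root_.Free (⊤ : SimpleGraph (Fin 3)) G) :
    ∀ c : G.ConnectedComponent,
      Is5Ring (G.induce c.supp) ∨ (G.induce c.supp).Colorable 2 := by
  intro c
  have e : G.induce c.supp ↪g G := Embedding.induce c.supp
  exact c.connected_toSimpleGraph.is5Ring_or_colorable_two (h1.comap e)
    (cliqueFree_of_free_top (h2.comap e))

/-- Every connected component of a `(P_5, triangle)`-free graph is a 5-ring or
bipartite. -/
theorem stmt_13 {V : Type} [Fintype V] (G : SimpleGraph V)
    (h1 : _root_.Free (pathGraph 5) G) (h2 : _root_.Free (⊤ : SimpleGraph (Fin 3)) G) :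
    ∀ c : G.ConnectedComponent,
      Is5Ring (G.induce c.supp) ∨ (G.induce c.supp).Colorable 2 :=
  stmt_13_general G h1 h2
end

section
/- Every connected (P_5, K_4)-free graph G has a longest path transversal of size at most 3; that is, there is a set S of at most three vertices of G such that every longest path of G contains a vertex of S. -/
open SimpleGraph

/-!
Among all paths `a - b - c` on three vertices choose one whose closed neighbourhood
`N[a, b, c]` is largest; it dominates `G`. Otherwise there is an edge `x u` with `x`
dominated and `u` not. If `x` is adjacent to a vertex `p` of the path but not to a
neighbour `r` of `p` on it, then either `x`, `p` and the third vertex `q` already dominate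
`N[r]`, or a vertex `z ∈ N[r]` they miss is adjacent to `u` (else `z r p x u` is an
induced `P_5`) and `z - u - x` dominates `N[a, b, c]` and `u`, again by `P_5`-freeness.
If `x` is adjacent to all of `a, b, c`, these induce a path (a triangle would give a `K_4`),
and `x - a - b` or `x - c - b` dominates: vertices `z_c ∈ N[c]` and `z_a ∈ N[a]` missed by
them would be adjacent, and whichever of them is adjacent to `u` closes an induced `P_5`
through `a - b - c`. Finally, a longest path avoiding a dominating set could be extended at
its first vertex.
-/

section

variable {V : Type*} (G : SimpleGraph V)

def closedNbhd (S : Set V) : Set V := {w | ∃ s ∈ S, s = w ∨ G.Adj s w}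

def IsDominatedByPath3 (A : Set V) : Prop :=
  ∃ a b c, G.Adj a b ∧ G.Adj b c ∧ a ≠ c ∧ A ⊆ closedNbhd G {a, b, c}

variable {G}

lemma mem_closedNbhd {S : Set V} {w : V} :
    w ∈ closedNbhd G S ↔ ∃ s ∈ S, s = w ∨ G.Adj s w := Iff.rfl

@[simp] lemma mem_closedNbhd_singleton {a w : V} :
    w ∈ closedNbhd G {a} ↔ a = w ∨ G.Adj a w := by
  simp [mem_closedNbhd]

@[simp] lemma mem_closedNbhd_insert {a w : V} {S : Set V} :
    w ∈ closedNbhd G (insert a S) ↔ (a = w ∨ G.Adj a w) ∨ w ∈ closedNbhd G S := by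
  simp [mem_closedNbhd]

lemma closedNbhd_mono {S T : Set V} (h : S ⊆ T) : closedNbhd G S ⊆ closedNbhd G T :=
  fun _ ⟨s, hs, hsw⟩ => ⟨s, h hs, hsw⟩

lemma closedNbhd_singleton_subset {s : V} {S : Set V} (hs : s ∈ S) :
    closedNbhd G {s} ⊆ closedNbhd G S :=
  closedNbhd_mono (Set.singleton_subset_iff.mpr hs)

lemma closedNbhd_insert (a : V) (S : Set V) :
    closedNbhd G (insert a S) = closedNbhd G {a} ∪ closedNbhd G S := by
  ext; simp

lemma closedNbhd_subset_iff {S A : Set V} :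
    closedNbhd G S ⊆ A ↔ ∀ s ∈ S, closedNbhd G {s} ⊆ A := by
  simp only [Set.subset_def, mem_closedNbhd, Set.mem_singleton_iff, exists_eq_left]
  grind

lemma insert_closedNbhd_triple_subset_iff {a b c u : V} {A : Set V} :
    insert u (closedNbhd G {a, b, c}) ⊆ A ↔
      u ∈ A ∧ closedNbhd G {a} ⊆ A ∧ closedNbhd G {b} ⊆ A ∧ closedNbhd G {c} ⊆ A := by
  rw [Set.insert_subset_iff, closedNbhd_subset_iff]
  simp only [Set.forall_mem_insert, Set.mem_singleton_iff, forall_eq]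

lemma not_induced_path5 (h5 : _root_.Free (pathGraph 5) G) {a b c d e : V}
    (hab : G.Adj a b) (hbc : G.Adj b c) (hcd : G.Adj c d) (hde : G.Adj d e)
    (hc : c ∉ closedNbhd G {a}) (hd : d ∉ closedNbhd G {a, b})
    (he : e ∉ closedNbhd G {a, b, c}) : False := by
  simp only [mem_closedNbhd_insert, mem_closedNbhd_singleton, not_or] at hc hd he
  refine h5.false ⟨⟨![a, b, c, d, e], fun i j hij => ?_⟩, fun {i j} => ?_⟩
  · fin_cases i <;> fin_cases j <;> simp_all [eq_comm]
  · change G.Adj (![a, b, c, d, e] i) (![a, b, c, d, e] j) ↔ _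
    fin_cases i <;> fin_cases j <;> simp_all [pathGraph_adj, adj_comm]

lemma closedNbhd_subset_of_induced_path4 (h5 : _root_.Free (pathGraph 5) G) {a b c d : V}
    (hab : G.Adj a b) (hbc : G.Adj b c) (hcd : G.Adj c d)
    (hc : c ∉ closedNbhd G {a}) (hd : d ∉ closedNbhd G {a, b}) :
    closedNbhd G {d} ⊆ closedNbhd G {a, b, c} := by
  intro e he
  by_contra he'
  obtain rfl | hde := mem_closedNbhd_singleton.mp he
  · exact he' (closedNbhd_singleton_subset (s := c) (by simp) (by simp [hcd]))
  · exact not_induced_path5 h5 hab hbc hcd hde hc hd he'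

lemma isDominatedByPath3_of_pivot (h5 : _root_.Free (pathGraph 5) G) {p q r x u : V}
    (hxu : G.Adj x u) (hxp : G.Adj x p) (hpr : G.Adj p r) (hxr : ¬G.Adj x r)
    (hq : G.Adj p q ∨ G.Adj x q) (hpq : p ≠ q) (hu : u ∉ closedNbhd G {p, q, r}) :
    IsDominatedByPath3 G (insert u (closedNbhd G {p, q, r})) := by
  have hux : u ∈ closedNbhd G {x} := by simp [hxu]
  have hxr' : x ≠ r := by rintro rfl; exact hu (by simp [hxu])
  have hxq : x ≠ q := by rintro rfl; exact hu (by simp [hxu])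
  simp only [mem_closedNbhd_insert, mem_closedNbhd_singleton, not_or] at hu
  by_cases hr : closedNbhd G {r} ⊆ closedNbhd G {x, p, q}
  · have hsub : insert u (closedNbhd G {p, q, r}) ⊆ closedNbhd G {x, p, q} :=
      insert_closedNbhd_triple_subset_iff.mpr ⟨closedNbhd_singleton_subset (by simp) hux,
        closedNbhd_singleton_subset (by simp), closedNbhd_singleton_subset (by simp), hr⟩
    rcases hq with hpq' | hxq'
    · exact ⟨x, p, q, hxp, hpq', hxq, hsub⟩
    · exact ⟨p, x, q, hxp.symm, hxq', hpq, by rwa [Set.insert_comm p x]⟩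
  obtain ⟨z, hzr, hz⟩ := Set.not_subset.mp hr
  simp only [mem_closedNbhd_insert, mem_closedNbhd_singleton, not_or] at hz hzr
  have hrz : G.Adj r z := hzr.resolve_left (by rintro rfl; exact hz.2.1.2 hpr)
  have hzu : G.Adj z u := by
    have hu' := closedNbhd_subset_of_induced_path4 h5 hrz.symm hpr.symm hxp.symm
      (by simp_all [adj_comm, eq_comm]) (by simp_all [adj_comm, eq_comm]) hux
    simp only [mem_closedNbhd_insert, mem_closedNbhd_singleton] at hu'
    rcases hu' with (rfl | h) | h | h <;> simp_all
  have hp := closedNbhd_subset_of_induced_path4 h5 hzu hxu.symm hxp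
    (by simp_all [adj_comm, eq_comm]) (by simp_all [adj_comm, eq_comm])
  have hup : closedNbhd G {u, x, p} ⊆ closedNbhd G {z, u, x} := by
    rw [closedNbhd_insert, closedNbhd_insert]
    exact Set.union_subset (closedNbhd_singleton_subset (by simp))
      (Set.union_subset (closedNbhd_singleton_subset (by simp)) hp)
  have hr' := closedNbhd_subset_of_induced_path4 h5 hxu.symm hxp hpr
    (by simp_all [adj_comm, eq_comm]) (by simp_all [adj_comm, eq_comm])
  have hq' : closedNbhd G {q} ⊆ closedNbhd G {z, u, x} := by
    by_cases hxq' : G.Adj x q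
    · exact closedNbhd_subset_of_induced_path4 h5 hzu hxu.symm hxq'
        (by simp_all [adj_comm, eq_comm]) (by simp_all [adj_comm, eq_comm])
    · exact (closedNbhd_subset_of_induced_path4 h5 hxu.symm hxp (hq.resolve_right hxq')
        (by simp_all [adj_comm, eq_comm]) (by simp_all [adj_comm, eq_comm])).trans hup
  exact ⟨z, u, x, hzu, hxu.symm, fun h => hz.1.1 h.symm,
    insert_closedNbhd_triple_subset_iff.mpr ⟨by simp, hp, hq', hr'.trans hup⟩⟩

lemma isDominatedByPath3_of_complete_to_path3 (h5 : _root_.Free (pathGraph 5) G)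
    {a b c x u : V} (hab : G.Adj a b) (hbc : G.Adj b c) (hac : c ∉ closedNbhd G {a})
    (hxa : G.Adj x a) (hxb : G.Adj x b) (hxc : G.Adj x c) (hxu : G.Adj x u)
    (hu : u ∉ closedNbhd G {a, b, c}) :
    IsDominatedByPath3 G (insert u (closedNbhd G {a, b, c})) := by
  have hux : u ∈ closedNbhd G {x} := by simp [hxu]
  by_cases hc : closedNbhd G {c} ⊆ closedNbhd G {x, a, b}
  · exact ⟨x, a, b, hxa, hab, hxb.ne, insert_closedNbhd_triple_subset_iff.mpr
      ⟨closedNbhd_singleton_subset (by simp) hux, closedNbhd_singleton_subset (by simp),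
        closedNbhd_singleton_subset (by simp), hc⟩⟩
  by_cases ha : closedNbhd G {a} ⊆ closedNbhd G {x, c, b}
  · exact ⟨x, c, b, hxc, hbc.symm, hxb.ne, insert_closedNbhd_triple_subset_iff.mpr
      ⟨closedNbhd_singleton_subset (by simp) hux, ha, closedNbhd_singleton_subset (by simp),
        closedNbhd_singleton_subset (by simp)⟩⟩
  exfalso
  obtain ⟨zc, hzc, hzc'⟩ := Set.not_subset.mp hc
  obtain ⟨za, hza, hza'⟩ := Set.not_subset.mp ha
  simp only [mem_closedNbhd_insert, mem_closedNbhd_singleton, not_or] at hu hzc hzc' hza hza' hac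
  have hczc : G.Adj c zc := hzc.resolve_left (by rintro rfl; exact hzc'.2.2.2 hbc)
  have haza : G.Adj a za := hza.resolve_left (by rintro rfl; exact hza'.2.2.2 hab.symm)
  have hne : za ≠ zc := by rintro rfl; exact hza'.2.1.2 hczc
  have hzau : za ≠ u := by rintro rfl; exact hu.1.2 haza
  have hzcu : zc ≠ u := by rintro rfl; exact hu.2.2.2 hczc
  have hzz : G.Adj za zc := by
    by_contra h
    refine not_induced_path5 h5 haza.symm hab hbc hczc ?_ ?_ ?_ <;> simp_all [adj_comm, eq_comm]
  by_cases hau : G.Adj za u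
  · refine not_induced_path5 h5 hbc.symm hab.symm haza hau ?_ ?_ ?_ <;>
      simp_all [adj_comm, eq_comm]
  by_cases hcu : G.Adj zc u
  · refine not_induced_path5 h5 hab hbc hczc hcu ?_ ?_ ?_ <;> simp_all [adj_comm, eq_comm]
  refine not_induced_path5 h5 hzz hczc.symm hxc.symm hxu ?_ ?_ ?_ <;>
    simp_all [adj_comm, eq_comm]

lemma isDominatedByPath3_insert_of_adj (h5 : _root_.Free (pathGraph 5) G)
    (h4 : G.CliqueFree 4) {a b c x u : V} (hab : G.Adj a b) (hbc : G.Adj b c) (hac : a ≠ c)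
    (hx : x ∈ closedNbhd G {a, b, c}) (hxu : G.Adj x u) (hu : u ∉ closedNbhd G {a, b, c}) :
    IsDominatedByPath3 G (insert u (closedNbhd G {a, b, c})) := by
  classical
  have hx_ne : x ≠ a ∧ x ≠ b ∧ x ≠ c := by
    refine ⟨?_, ?_, ?_⟩ <;> rintro rfl <;> exact hu (by simp [hxu])
  have hx' : G.Adj x a ∨ G.Adj x b ∨ G.Adj x c := by
    simp only [mem_closedNbhd_insert, mem_closedNbhd_singleton] at hx
    rcases hx with (h | h) | (h | h) | h | h <;> simp_all [adj_comm, eq_comm]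
  by_cases hxb : G.Adj x b
  · by_cases hxa : G.Adj x a
    · by_cases hxc : G.Adj x c
      · by_cases hac' : G.Adj a c
        · exact (h4 {x, a, b, c} ((is3Clique_triple_iff.mpr ⟨hab, hac', hbc⟩).insert
            (by simp [hxa, hxb, hxc]))).elim
        · exact isDominatedByPath3_of_complete_to_path3 h5 hab hbc (by simp [hac, hac'])
            hxa hxb hxc hxu hu
      · rw [Set.insert_comm a b] at hu ⊢
        exact isDominatedByPath3_of_pivot h5 hxu hxb hbc hxc (Or.inl hab.symm) hab.ne' hu
    · rw [Set.insert_comm a b, Set.pair_comm a c] at hu ⊢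
      exact isDominatedByPath3_of_pivot h5 hxu hxb hab.symm hxa (Or.inl hbc) hbc.ne hu
  by_cases hxa : G.Adj x a
  · by_cases hq : G.Adj a c ∨ G.Adj x c
    · rw [Set.pair_comm b c] at hu ⊢
      exact isDominatedByPath3_of_pivot h5 hxu hxa hab hxb hq hac hu
    · refine (not_induced_path5 h5 hbc.symm hab.symm hxa.symm hxu ?_ ?_ ?_).elim <;>
        simp_all [adj_comm, eq_comm]
  have hxc : G.Adj x c := by tauto
  by_cases hac' : G.Adj a c
  · rw [Set.pair_comm b c, Set.insert_comm a c] at hu ⊢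
    exact isDominatedByPath3_of_pivot h5 hxu hxc hbc.symm hxb (Or.inl hac'.symm) hac.symm hu
  · refine (not_induced_path5 h5 hab hbc hxc.symm hxu ?_ ?_ ?_).elim <;>
      simp_all [adj_comm, eq_comm]

lemma exists_path3_of_not_adj (hG : G.Preconnected) {v w : V} (hne : v ≠ w)
    (hvw : ¬G.Adj v w) : ∃ b c, G.Adj v b ∧ G.Adj b c ∧ v ≠ c := by
  classical
  obtain ⟨p, hp⟩ := (hG v w).some.toPath
  cases p with
  | nil => exact absurd rfl hne
  | cons h₁ q =>
    cases q with
    | nil => exact absurd h₁ hvw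
    | cons h₂ r =>
      refine ⟨_, _, h₁, h₂, fun h => ((Walk.cons_isPath_iff _ _).mp hp).2 ?_⟩
      rw [h, Walk.support_cons]
      exact List.mem_cons_of_mem _ r.start_mem_support

lemma isDominatedByPath3_univ [Finite V] (h5 : _root_.Free (pathGraph 5) G)
    (h4 : G.CliqueFree 4) (hG : G.Connected) (h3 : ∃ a b c, G.Adj a b ∧ G.Adj b c ∧ a ≠ c) :
    IsDominatedByPath3 G Set.univ := by
  obtain ⟨⟨a, b, c⟩, ⟨hab, hbc, hac⟩, hmax⟩ := Set.exists_max_image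
    {t : V × V × V | G.Adj t.1 t.2.1 ∧ G.Adj t.2.1 t.2.2 ∧ t.1 ≠ t.2.2}
    (fun t => (closedNbhd G {t.1, t.2.1, t.2.2}).ncard) (Set.toFinite _)
    (let ⟨a, b, c, h⟩ := h3; ⟨(a, b, c), h⟩)
  refine ⟨a, b, c, hab, hbc, hac, fun v _ => ?_⟩
  by_contra hv
  obtain ⟨⟨⟨x, u⟩, hxu⟩, -, hx, hu⟩ :=
    (hG.preconnected a v).some.exists_boundary_dart _ (by simp) hv
  obtain ⟨a', b', c', hab', hbc', hac', hsub⟩ :=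
    isDominatedByPath3_insert_of_adj h5 h4 hab hbc hac hx hxu hu
  have hlt := Set.ncard_lt_ncard ((Set.ssubset_insert hu).trans_subset hsub) (Set.toFinite _)
  exact (hmax (a', b', c') ⟨hab', hbc', hac'⟩).not_gt hlt

lemma exists_dominating_finset [Finite V] (h5 : _root_.Free (pathGraph 5) G)
    (h4 : G.CliqueFree 4) (hG : G.Connected) :
    ∃ D : Finset V, D.card ≤ 3 ∧ ∀ v, v ∈ closedNbhd G D := by
  classical
  by_cases h3 : ∃ a b c, G.Adj a b ∧ G.Adj b c ∧ a ≠ c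
  · obtain ⟨a, b, c, -, -, -, hD⟩ := isDominatedByPath3_univ h5 h4 hG h3
    exact ⟨{a, b, c}, Finset.card_le_three, fun v => by simpa using hD (Set.mem_univ v)⟩
  · obtain ⟨v⟩ := hG.nonempty
    refine ⟨{v}, by simp, fun w => by_contra fun hw => h3 ?_⟩
    simp only [Finset.coe_singleton, mem_closedNbhd_singleton, not_or] at hw
    obtain ⟨b, c, h⟩ := exists_path3_of_not_adj hG.preconnected hw.1 hw.2
    exact ⟨v, b, c, h⟩

lemma exists_mem_support_of_isLongestPath {D : Set V} (hD : ∀ v, v ∈ closedNbhd G D)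
    {u v : V} {p : G.Walk u v} (hp : IsLongestPath G p) : ∃ d ∈ D, d ∈ p.support := by
  obtain ⟨d, hdD, rfl | hdu⟩ := hD u
  · exact ⟨d, hdD, p.start_mem_support⟩
  · by_contra! h
    have := hp.2 d v (.cons hdu p) ((Walk.cons_isPath_iff _ _).mpr ⟨hp.1, h d hdD⟩)
    simp at this

end

/-- Every connected `(P_5, K_4)`-free graph has a longest path transversal of size
at most three. -/
theorem stmt_19 {V : Type} [Fintype V] (G : SimpleGraph V) (hG : G.Connected)
    (h1 : _root_.Free (pathGraph 5) G) (h2 : _root_.Free (⊤ : SimpleGraph (Fin 4)) G) :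
    ∃ S : Finset V, S.card ≤ 3 ∧
      ∀ (u v : V) (p : G.Walk u v), IsLongestPath G p → ∃ s ∈ S, s ∈ p.support := by
  have h4 : G.CliqueFree 4 := cliqueFree_iff.mpr ⟨fun f => h2.false f.topEmbedding⟩
  obtain ⟨S, hcard, hS⟩ := exists_dominating_finset h1 h4 hG
  exact ⟨S, hcard, fun u v p hp => exists_mem_support_of_isLongestPath hS hp⟩
end
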